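/- Let h_{ab} be a smooth symmetric metric perturbation on ℝ⁴ satisfying the harmonic gauge condition ∂_b h^{ab} = (1/2) ∂^a h, and suppose its linearized Lanczos potential vanishes identically: (1/2)( h_{c[a,b]} − (1/6) η_{c[a} h_{,b]} ) = 0 for all indices. Then the linearized Weyl tensor of h vanishes: C_{abcd}[h] = 0. -/

import Mathlib

noncomputable section

/-- Points of flat spacetime ℝ⁴. -/
abbrev Spacetime : Type := Fin 4 → ℝ

/-- A scalar field on spacetime. -/
abbrev ScalarField : Type := Spacetime → ℝ

/-- The Minkowski metric η = diag(1, -1, -1, -1); numerically equal to its inverse η^{ab}. -/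
def η (a b : Fin 4) : ℝ := if a = b then (if a = 0 then 1 else -1) else 0

/-- The partial derivative ∂ₐ of a scalar field. -/
def pd (a : Fin 4) (f : ScalarField) : ScalarField := fun x => fderiv ℝ f x (Pi.single a 1)

/-- The trace h = η^{ab} h_{ab}. -/
def trh (h : Fin 4 → Fin 4 → ScalarField) : ScalarField := fun x => ∑ a, ∑ b, η a b * h a b x

/-- The linearized Lanczos potential
L_{abc} = (1/2)(h_{c[a,b]} - (1/6) η_{c[a} h_{,b]}). -/
def Lanc (h : Fin 4 → Fin 4 → ScalarField) (a b c : Fin 4) : ScalarField := fun x =>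
  (1/2) * ((1/2) * (pd b (h c a) x - pd a (h c b) x)
    - (1/6) * ((1/2) * (η c a * pd b (trh h) x - η c b * pd a (trh h) x)))

/-- The linearized Riemann tensor
R_{abcd}[h] = (1/2)(∂_b ∂_c h_{ad} + ∂_a ∂_d h_{bc} - ∂_a ∂_c h_{bd} - ∂_b ∂_d h_{ac}). -/
def Riem (h : Fin 4 → Fin 4 → ScalarField) (a b c d : Fin 4) : ScalarField := fun x =>
  (1/2) * (pd b (pd c (h a d)) x + pd a (pd d (h b c)) x
    - pd a (pd c (h b d)) x - pd b (pd d (h a c)) x)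

/-- The linearized Ricci tensor R_{ab}[h] = η^{cd} R_{acbd}[h]. -/
def Ric (h : Fin 4 → Fin 4 → ScalarField) (a b : Fin 4) : ScalarField := fun x =>
  ∑ c, ∑ d, η c d * Riem h a c b d x

/-- The linearized Ricci scalar R[h] = η^{ab} R_{ab}[h]. -/
def RS (h : Fin 4 → Fin 4 → ScalarField) : ScalarField := fun x => ∑ a, ∑ b, η a b * Ric h a b x

/-- The linearized Weyl tensor
C_{abcd}[h] = R_{abcd} - (η_{a[c} R_{d]b} - η_{b[c} R_{d]a}) + (R/3) η_{a[c} η_{d]b}. -/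
def Weyl (h : Fin 4 → Fin 4 → ScalarField) (a b c d : Fin 4) : ScalarField := fun x =>
  Riem h a b c d x
    - ((1/2) * (η a c * Ric h d b x - η a d * Ric h c b x)
      - (1/2) * (η b c * Ric h d a x - η b d * Ric h c a x))
    + (RS h x / 3) * ((1/2) * (η a c * η d b - η a d * η c b))

/-- L_{ab} = ∂^c L_{acb} - ∂_b (η^{cd} L_{acd}). -/
def Ldn (L : Fin 4 → Fin 4 → Fin 4 → ScalarField) (a b : Fin 4) : ScalarField := fun x =>
  (∑ c, ∑ d, η c d * pd d (L a c b) x)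
    - pd b (fun y => ∑ c, ∑ d, η c d * L a c d y) x

/-- L = η^{ab} L_{ab}. -/
def Ltr (L : Fin 4 → Fin 4 → Fin 4 → ScalarField) : ScalarField := fun x => ∑ a, ∑ b, η a b * Ldn L a b x

/-- The linearized Weyl–Lanczos formula:
C_{abcd}[L] = 2 L_{ab[c,d]} + 2 L_{cd[a,b]} - η_{a[c}(L_{|b|d]} + L_{d]b})
  + η_{b[c}(L_{|a|d]} + L_{d]a}) + (2L/3) η_{a[c} η_{d]b}. -/
def WL (L : Fin 4 → Fin 4 → Fin 4 → ScalarField) (a b c d : Fin 4) : ScalarField := fun x =>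
  2 * ((1/2) * (pd d (L a b c) x - pd c (L a b d) x))
    + 2 * ((1/2) * (pd b (L c d a) x - pd a (L c d b) x))
    - (1/2) * (η a c * (Ldn L b d x + Ldn L d b x) - η a d * (Ldn L b c x + Ldn L c b x))
    + (1/2) * (η b c * (Ldn L a d x + Ldn L d a x) - η b d * (Ldn L a c x + Ldn L c a x))
    + (2 * Ltr L x / 3) * ((1/2) * (η a c * η d b - η a d * η c b))


/-- Auxiliary: pd of a smooth function is smooth. -/
lemma myPdSmooth {f : ScalarField} (hf : ContDiff ℝ (⊤ : ℕ∞) f) (a : Fin 4) : ContDiff ℝ (⊤ : ℕ∞) (pd a f) :=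
  (hf.fderiv_right ((by simp))).clm_apply contDiff_const

/-- Auxiliary: symmetry of second partial derivatives. -/
lemma myPdComm {f : ScalarField} (hf : ContDiff ℝ (⊤ : ℕ∞) f) (a b : Fin 4) (x : Spacetime) :
    pd a (pd b f) x = pd b (pd a f) x := by
  have hsym : IsSymmSndFDerivAt ℝ f x := (hf.contDiffAt).isSymmSndFDerivAt (by simp; exact WithTop.coe_le_coe.mpr le_top)
  have hd : DifferentiableAt ℝ (fderiv ℝ f) x :=
    ((hf.fderiv_right (m := 1) (WithTop.coe_le_coe.mpr le_top)).differentiable one_ne_zero).differentiableAt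
  have key : ∀ v w : Spacetime, fderiv ℝ (fun y => fderiv ℝ f y w) x v
      = fderiv ℝ (fderiv ℝ f) x v w := by
    intro v w
    have := ((ContinuousLinearMap.apply ℝ ℝ w).hasFDerivAt.comp x hd.hasFDerivAt).fderiv
    rw [show (fun y => fderiv ℝ f y w) = (ContinuousLinearMap.apply ℝ ℝ w) ∘ (fderiv ℝ f) from rfl,
      this]
    rfl
  show fderiv ℝ (fun y => fderiv ℝ f y (Pi.single b 1)) x (Pi.single a 1)
      = fderiv ℝ (fun y => fderiv ℝ f y (Pi.single a 1)) x (Pi.single b 1)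
  rw [key, key]
  exact hsym _ _

/-- Auxiliary: linearity of pd. -/
lemma myPdComb (a : Fin 4) (k1 k2 : ℝ) (f g : ScalarField) (hf : Differentiable ℝ f)
    (hg : Differentiable ℝ g) (x : Spacetime) :
    pd a (fun y => k1 * f y - k2 * g y) x = k1 * pd a f x - k2 * pd a g x := by
  unfold pd
  rw [fderiv_fun_sub ((hf x).const_mul k1) ((hg x).const_mul k2), fderiv_const_mul (hf x) k1,
    fderiv_const_mul (hg x) k2]
  simp

/-- Auxiliary: difference of pd's via a pointwise identity. -/
lemma myPdStep (e : Fin 4) (k1 k2 : ℝ) (P Q R S : ScalarField) (hP : Differentiable ℝ P)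
    (hQ : Differentiable ℝ Q) (hR : Differentiable ℝ R) (hS : Differentiable ℝ S)
    (hid : ∀ y, P y - Q y = k1 * R y - k2 * S y) (x : Spacetime) :
    pd e P x - pd e Q x = k1 * pd e R x - k2 * pd e S x := by
  have h1 : pd e (fun y => 1 * P y - 1 * Q y) x = 1 * pd e P x - 1 * pd e Q x :=
    myPdComb e 1 1 P Q hP hQ x
  have h2 : pd e (fun y => k1 * R y - k2 * S y) x = k1 * pd e R x - k2 * pd e S x :=
    myPdComb e k1 k2 R S hR hS x
  have h3 : (fun y => 1 * P y - 1 * Q y) = (fun y => k1 * R y - k2 * S y) := by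
    funext y; have := hid y; ring_nf; linarith
  rw [h3] at h1
  rw [h2] at h1
  linarith

lemma myEtaSymm (a b : Fin 4) : η a b = η b a := by
  unfold η
  rcases eq_or_ne a b with rfl | hne
  · rfl
  · simp [hne, hne.symm]


lemma η00 : η 0 0 = 1 := by simp [η]
lemma η11 : η 1 1 = -1 := by simp [η, show (1:Fin 4) ≠ 0 by decide]
lemma η22 : η 2 2 = -1 := by simp [η, show (2:Fin 4) ≠ 0 by decide]
lemma η33 : η 3 3 = -1 := by simp [η, show (3:Fin 4) ≠ 0 by decide]
lemma η01 : η 0 1 = 0 := by simp [η, show (0:Fin 4) ≠ 1 by decide]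
lemma η02 : η 0 2 = 0 := by simp [η, show (0:Fin 4) ≠ 2 by decide]
lemma η03 : η 0 3 = 0 := by simp [η, show (0:Fin 4) ≠ 3 by decide]
lemma η10 : η 1 0 = 0 := by simp [η, show (1:Fin 4) ≠ 0 by decide]
lemma η12 : η 1 2 = 0 := by simp [η, show (1:Fin 4) ≠ 2 by decide]
lemma η13 : η 1 3 = 0 := by simp [η, show (1:Fin 4) ≠ 3 by decide]
lemma η20 : η 2 0 = 0 := by simp [η, show (2:Fin 4) ≠ 0 by decide]
lemma η21 : η 2 1 = 0 := by simp [η, show (2:Fin 4) ≠ 1 by decide]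
lemma η23 : η 2 3 = 0 := by simp [η, show (2:Fin 4) ≠ 3 by decide]
lemma η30 : η 3 0 = 0 := by simp [η, show (3:Fin 4) ≠ 0 by decide]
lemma η31 : η 3 1 = 0 := by simp [η, show (3:Fin 4) ≠ 1 by decide]
lemma η32 : η 3 2 = 0 := by simp [η, show (3:Fin 4) ≠ 2 by decide]

lemma myEtaContr (X : Fin 4 → ℝ) (a : Fin 4) :
    η a 0 * X 0 - η a 1 * X 1 - η a 2 * X 2 - η a 3 * X 3 = X a := by
  fin_cases a
  · show η 0 0 * X 0 - η 0 1 * X 1 - η 0 2 * X 2 - η 0 3 * X 3 = X 0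
    rw [η00, η01, η02, η03]; ring
  · show η 1 0 * X 0 - η 1 1 * X 1 - η 1 2 * X 2 - η 1 3 * X 3 = X 1
    rw [η10, η11, η12, η13]; ring
  · show η 2 0 * X 0 - η 2 1 * X 1 - η 2 2 * X 2 - η 2 3 * X 3 = X 2
    rw [η20, η21, η22, η23]; ring
  · show η 3 0 * X 0 - η 3 1 * X 1 - η 3 2 * X 2 - η 3 3 * X 3 = X 3
    rw [η30, η31, η32, η33]; ring

lemma myEtaContr' (X : Fin 4 → ℝ) (a : Fin 4) :
    η 0 a * X 0 - η 1 a * X 1 - η 2 a * X 2 - η 3 a * X 3 = X a := by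
  fin_cases a
  · show η 0 0 * X 0 - η 1 0 * X 1 - η 2 0 * X 2 - η 3 0 * X 3 = X 0
    rw [η00, η10, η20, η30]; ring
  · show η 0 1 * X 0 - η 1 1 * X 1 - η 2 1 * X 2 - η 3 1 * X 3 = X 1
    rw [η01, η11, η21, η31]; ring
  · show η 0 2 * X 0 - η 1 2 * X 1 - η 2 2 * X 2 - η 3 2 * X 3 = X 2
    rw [η02, η12, η22, η32]; ring
  · show η 0 3 * X 0 - η 1 3 * X 1 - η 2 3 * X 2 - η 3 3 * X 3 = X 3
    rw [η03, η13, η23, η33]; ring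


/-- If a smooth symmetric metric perturbation in the harmonic gauge has
identically vanishing linearized Lanczos potential, then its linearized Weyl tensor
vanishes. -/
theorem weyl_zero_of_lanczos_zero
    (h : Fin 4 → Fin 4 → ScalarField)
    (hsmooth : ∀ a b, ContDiff ℝ (⊤ : ℕ∞) (h a b))
    (hsym : ∀ a b, h a b = h b a)
    (hgauge : ∀ a, ∀ x : Spacetime,
      (∑ b, pd b (fun y => ∑ c, ∑ d, η a c * η b d * h c d y) x)
        = (1/2) * ∑ b, η a b * pd b (trh h) x)
    (hzero : ∀ a b c, ∀ x : Spacetime, Lanc h a b c x = 0) :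
    ∀ a b c d, ∀ x : Spacetime, Weyl h a b c d x = 0 := by
  -- basic differentiability facts
  set T : ScalarField := trh h with hT
  have hTsmooth : ContDiff ℝ (⊤ : ℕ∞) T := by
    rw [hT]
    unfold trh
    apply ContDiff.sum; intro a _
    apply ContDiff.sum; intro b _
    exact contDiff_const.mul (hsmooth a b)
  have hTd : ∀ e : Fin 4, Differentiable ℝ (pd e T) := fun e =>
    (myPdSmooth hTsmooth e).differentiable (by simp)
  have hhd : ∀ e a b, Differentiable ℝ (pd e (h a b)) := fun e a b =>
    (myPdSmooth (hsmooth a b) e).differentiable (by simp)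
  have hcomm : ∀ (i j : Fin 4) (x : Spacetime), pd i (pd j T) x = pd j (pd i T) x :=
    fun i j x => myPdComm hTsmooth i j x
  -- the key consequence of vanishing Lanczos potential
  have key : ∀ (A B C : Fin 4) (y : Spacetime),
      pd B (h C A) y - pd A (h C B) y = (1/6) * (η C A * pd B T y) - (1/6) * (η C B * pd A T y) := by
    intro A B C y
    have := hzero A B C y
    unfold Lanc at this
    rw [← hT] at this
    linarith
  -- the Riemann tensor in terms of second derivatives of the trace
  have hRiem : ∀ (a b c d : Fin 4) (x : Spacetime), Riem h a b c d x =
      (1/12) * (η a d * pd b (pd c T) x - η a c * pd b (pd d T) x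
        + η b c * pd a (pd d T) x - η b d * pd a (pd c T) x) := by
    intro a b c d x
    have e1 : pd b (pd c (h a d)) x - pd b (pd d (h a c)) x
        = (1/6 * η a d) * pd b (pd c T) x - (1/6 * η a c) * pd b (pd d T) x := by
      have := myPdStep b (1/6 * η a d) (1/6 * η a c) (pd c (h a d)) (pd d (h a c))
        (pd c T) (pd d T) (hhd c a d) (hhd d a c) (hTd c) (hTd d)
        (fun y => by have := key d c a y; ring_nf; ring_nf at this; linarith) x
      linarith
    have e2 : pd a (pd d (h b c)) x - pd a (pd c (h b d)) x
        = (1/6 * η b c) * pd a (pd d T) x - (1/6 * η b d) * pd a (pd c T) x := by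
      have := myPdStep a (1/6 * η b c) (1/6 * η b d) (pd d (h b c)) (pd c (h b d))
        (pd d T) (pd c T) (hhd d b c) (hhd c b d) (hTd d) (hTd c)
        (fun y => by have := key c d b y; ring_nf; ring_nf at this; linarith) x
      linarith
    simp only [Riem]
    linear_combination (1/2) * e1 + (1/2) * e2
  -- the Ricci tensor
  have hRic : ∀ (a b : Fin 4) (x : Spacetime), Ric h a b x =
      -(1/6) * pd a (pd b T) x - (1/12) * η a b *
        (pd 0 (pd 0 T) x - pd 1 (pd 1 T) x - pd 2 (pd 2 T) x - pd 3 (pd 3 T) x) := by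
    intro a b x
    simp only [Ric, Fin.sum_univ_four, hRiem, η00, η01, η02, η03, η10, η11, η12, η13,
      η20, η21, η22, η23, η30, η31, η32, η33]
    have c1 := myEtaContr (fun c => pd c (pd b T) x) a
    have c2 := myEtaContr' (fun c => pd a (pd c T) x) b
    beta_reduce at c1 c2
    linear_combination (1/12) * c1 + (1/12) * c2
  -- the Ricci scalar
  have hRS : ∀ x : Spacetime, RS h x =
      -(1/2) * (pd 0 (pd 0 T) x - pd 1 (pd 1 T) x - pd 2 (pd 2 T) x - pd 3 (pd 3 T) x) := by
    intro x
    simp only [RS, Fin.sum_univ_four, hRic, η00, η01, η02, η03, η10, η11, η12, η13,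
      η20, η21, η22, η23, η30, η31, η32, η33]
    ring
  -- conclusion
  intro a b c d x
  simp only [Weyl]
  rw [hRiem a b c d x, hRic d b x, hRic c b x, hRic d a x, hRic c a x, hRS x]
  rw [show η d b = η b d from myEtaSymm d b, show η c b = η b c from myEtaSymm c b,
    show η d a = η a d from myEtaSymm d a, show η c a = η a c from myEtaSymm c a]
  linear_combination ((1/12) * η a d) * hcomm b c x - ((1/12) * η a c) * hcomm b d x
    + ((1/12) * η b c) * hcomm a d x - ((1/12) * η b d) * hcomm a c x
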